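/- arXiv:1407.2976 — 5 statements merged into one kernel-verified Lean document; each statement's English description precedes it below -/
import Mathlib

section
/- The sequence s_n = Σ_{q=1}^{n} 2^q / C(2n,q) satisfies the recursion 9(2n+1)·s_{n+1} − 4(2n+3)·s_n = (10n+9)/(n+1) + n·2^{n+1}/C(2n,n) for all n ≥ 1. -/
/-!
Creative telescoping. With `a q = 2 ^ q / C(2n, q)` and `b q = 2 ^ q / C(2n + 2, q)`, the
combination `9 (2n + 1) b q - 4 (2n + 3) a q` equals `G (q + 1) - G q` for the certificate
`G q = R(q) a q`, `R` rational in `q` (`sCertificate`, as produced by Zeilberger's algorithm).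
Summed over `1 ≤ q ≤ n` this telescopes to `G (n + 1) - G 1`; together with the last term
`b (n + 1)` of `s (n + 1)`, everything left is a multiple of `2 ^ n / C(2n, n)` or a rational
function of `n`.
-/

noncomputable def s (m : ℕ) : ℝ :=
  ∑ q ∈ Finset.Icc 1 m, (2 : ℝ) ^ q / (Nat.choose (2 * m) q : ℝ)

section ChooseCast

variable {R : Type*} [CommRing R]

lemma cast_choose_succ_right_mul {m q : ℕ} (hq : q ≤ m) :
    (m.choose (q + 1) : R) * (q + 1) = m.choose q * (m - q) := by
  have h := congrArg (Nat.cast : ℕ → R) (Nat.choose_succ_right_eq m q)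
  push_cast [Nat.cast_sub hq] at h
  exact h

lemma cast_choose_add_two_mul {m q : ℕ} (hq : q ≤ m) :
    ((m + 2).choose q : R) * ((m + 2 - q) * (m + 1 - q)) = m.choose q * ((m + 2) * (m + 1)) := by
  have h₁ := congrArg (Nat.cast : ℕ → R) (Nat.choose_mul_succ_eq m q)
  have h₂ := congrArg (Nat.cast : ℕ → R) (Nat.choose_mul_succ_eq (m + 1) q)
  push_cast [Nat.cast_sub (by omega : q ≤ m + 1), Nat.cast_sub (by omega : q ≤ m + 1 + 1)] at h₁ h₂
  linear_combination -(↑m + 2 : R) * h₁ - (↑m + 1 - ↑q : R) * h₂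

end ChooseCast

noncomputable def sCertificate (n q : ℕ) : ℝ :=
  (-3 * (q : ℝ) ^ 2 + (16 * n + 15) * q - (20 * (n : ℝ) ^ 2 + 34 * n + 12)) * 2 ^ q /
    ((2 * n + 2) * (2 * n).choose q)

lemma sCertificate_sub {n q : ℕ} (hq : q < 2 * n) :
    9 * (2 * (n : ℝ) + 1) * (2 ^ q / (2 * n + 2).choose q) -
        4 * (2 * (n : ℝ) + 3) * (2 ^ q / (2 * n).choose q) =
      sCertificate n (q + 1) - sCertificate n q := by
  have hq' : (q : ℝ) + 1 ≤ 2 * n := by exact_mod_cast hq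
  have h₁ : ((2 * n).choose (q + 1) : ℝ) = (2 * n).choose q * (2 * n - q) / (q + 1) := by
    rw [eq_div_iff (by positivity)]
    simpa using cast_choose_succ_right_mul (R := ℝ) hq.le
  have h₂ : ((2 * n + 2).choose q : ℝ) =
      (2 * n).choose q * ((2 * n + 2) * (2 * n + 1)) / ((2 * n + 2 - q) * (2 * n + 1 - q)) := by
    rw [eq_div_iff (by nlinarith)]
    simpa using cast_choose_add_two_mul (R := ℝ) hq.le
  have : (2 * n : ℝ) - q ≠ 0 := by linarith
  have : (2 * n : ℝ) + 1 - q ≠ 0 := by linarith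
  have : (2 * n : ℝ) + 2 - q ≠ 0 := by linarith
  rw [sCertificate, sCertificate, h₁, h₂]
  push_cast
  field_simp
  ring

lemma sum_sCertificate_sub (n : ℕ) :
    9 * (2 * (n : ℝ) + 1) * ∑ q ∈ Finset.Icc 1 n, 2 ^ q / ((2 * n + 2).choose q : ℝ) -
        4 * (2 * (n : ℝ) + 3) * ∑ q ∈ Finset.Icc 1 n, 2 ^ q / ((2 * n).choose q : ℝ) =
      sCertificate n (n + 1) - sCertificate n 1 := by
  rw [Finset.mul_sum, Finset.mul_sum, ← Finset.sum_sub_distrib, ← Finset.Ico_add_one_right_eq_Icc,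
    ← Finset.sum_Ico_sub _ (by omega)]
  refine Finset.sum_congr rfl fun q hq => sCertificate_sub ?_
  rw [Finset.mem_Ico] at hq
  omega

lemma s_succ (n : ℕ) :
    s (n + 1) = ∑ q ∈ Finset.Icc 1 n, 2 ^ q / ((2 * n + 2).choose q : ℝ) +
      2 ^ (n + 1) / ((2 * n + 2).choose (n + 1) : ℝ) := by
  rw [s, Finset.sum_Icc_succ_top (by omega), mul_add_one]

lemma cast_choose_two_mul_add_two (n : ℕ) :
    ((2 * n + 2).choose (n + 1) : ℝ) = 2 * (2 * n + 1) * (2 * n).choose n / (n + 1) := by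
  have h := Nat.succ_mul_centralBinom_succ n
  rw [Nat.centralBinom_eq_two_mul_choose, Nat.centralBinom_eq_two_mul_choose, mul_add_one] at h
  rw [eq_div_iff (by positivity)]
  exact_mod_cast (mul_comm _ _).trans h

lemma sCertificate_one {n : ℕ} (hn : n ≠ 0) : sCertificate n 1 = -(10 * n + 9) / (n + 1) := by
  rw [sCertificate, Nat.choose_one_right]
  push_cast
  field_simp
  ring

lemma sCertificate_succ_self {n : ℕ} (hn : n ≠ 0) :
    sCertificate n (n + 1) = -(7 * n + 9) * 2 ^ n / (2 * n).choose n := by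
  have h : ((2 * n).choose (n + 1) : ℝ) = (2 * n).choose n * n / (n + 1) := by
    rw [eq_div_iff (by positivity)]
    have := cast_choose_succ_right_mul (R := ℝ) (by omega : n ≤ 2 * n)
    push_cast at this
    linear_combination this
  rw [sCertificate, h]
  push_cast
  field_simp
  ring

theorem s_recursion_general (n : ℕ) :
    9 * (2 * (n : ℝ) + 1) * s (n + 1) - 4 * (2 * (n : ℝ) + 3) * s n =
      (10 * (n : ℝ) + 9) / ((n : ℝ) + 1) +
        (n : ℝ) * 2 ^ (n + 1) / (Nat.choose (2 * n) n : ℝ) := by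
  obtain rfl | hn := eq_or_ne n 0
  · norm_num [s]
  rw [s_succ, mul_add, add_sub_right_comm, s, sum_sCertificate_sub,
    sCertificate_succ_self hn, sCertificate_one hn, cast_choose_two_mul_add_two]
  field_simp
  ring

theorem s_recursion (n : ℕ) (hn : 1 ≤ n) :
    9 * (2 * (n : ℝ) + 1) * s (n + 1) - 4 * (2 * (n : ℝ) + 3) * s n =
      (10 * (n : ℝ) + 9) / ((n : ℝ) + 1) +
        (n : ℝ) * 2 ^ (n + 1) / (Nat.choose (2 * n) n : ℝ) :=
  s_recursion_general n
end

section
/- For all n ≥ 23, s_n ≤ (n+10)/(n(n−1)), where s_n = Σ_{q=1}^{n} 2^q / C(2n,q). -/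
/-!
Write `t_q = 2^q / C(2n, q)`. Since `t_{q+1} / t_q = 2(q+1) / (2n-q)`, the sequence decreases while
`3q + 2 ≤ 2n` and increases afterwards, so on `3 ≤ q ≤ n` it is bounded by `max t_3 t_n`. The bound
`4^n < n C(2n, n)` together with `n^4 ≤ 2^n` gives `t_n ≤ t_3`. Hence
`s_n ≤ t_1 + t_2 + (n - 2) t_3`, an explicit rational function of `n` below `(n+10)/(n(n-1))`.
-/

open Finset

namespace Nat

theorem two_mul_choose_le_choose_succ {m j : ℕ} (h : 3 * j + 2 ≤ m) :
    2 * m.choose j ≤ m.choose (j + 1) := by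
  refine Nat.le_of_mul_le_mul_right ?_ j.succ_pos
  rw [choose_succ_right_eq, mul_comm 2, mul_assoc]
  exact Nat.mul_le_mul_left _ (by omega)

theorem choose_succ_le_two_mul_choose {m j : ℕ} (h : m ≤ 3 * j + 2) :
    m.choose (j + 1) ≤ 2 * m.choose j := by
  refine Nat.le_of_mul_le_mul_right ?_ j.succ_pos
  rw [choose_succ_right_eq, mul_comm 2, mul_assoc]
  exact Nat.mul_le_mul_left _ (by omega)

theorem cast_choose_three {K : Type*} [Field K] [CharZero K] (a : ℕ) :
    (a.choose 3 : K) = a * (a - 1) * (a - 2) / 6 := by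
  rcases lt_or_ge a 2 with h | h
  · interval_cases a <;> simp [choose_eq_zero_of_lt]
  · have := congrArg (Nat.cast : ℕ → K) (choose_succ_right_eq a 2)
    push_cast [h] at this
    rw [cast_choose_two] at this
    linear_combination this / 3

theorem pow_four_le_two_pow {n : ℕ} (hn : 16 ≤ n) : n ^ 4 ≤ 2 ^ n := by
  induction n, hn using Nat.le_induction with
  | base => norm_num
  | succ m hm ih =>
    calc (m + 1) ^ 4 ≤ 2 * m ^ 4 := by nlinarith [Nat.mul_le_mul_right (m ^ 3) hm]
      _ ≤ 2 * 2 ^ m := Nat.mul_le_mul_left 2 ih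
      _ = 2 ^ (m + 1) := by ring

theorem two_pow_mul_pow_three_le_centralBinom {n : ℕ} (hn : 16 ≤ n) :
    2 ^ n * n ^ 3 ≤ centralBinom n := by
  refine Nat.le_of_mul_le_mul_left ?_ (by omega : 0 < n)
  calc n * (2 ^ n * n ^ 3) = n ^ 4 * 2 ^ n := by ring
    _ ≤ 2 ^ n * 2 ^ n := Nat.mul_le_mul_right _ (pow_four_le_two_pow hn)
    _ = 4 ^ n := by rw [← mul_pow]; rfl
    _ ≤ n * centralBinom n := (four_pow_lt_mul_centralBinom n (by omega)).le

end Nat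

noncomputable def twoPowDivChoose (m q : ℕ) : ℝ := 2 ^ q / m.choose q

theorem twoPowDivChoose_antitoneOn {m b : ℕ} (a : ℕ) (hb : 3 * b ≤ m + 1) :
    AntitoneOn (twoPowDivChoose m) (Set.Icc a b) := by
  refine antitoneOn_of_add_one_le Set.ordConnected_Icc fun j _ _ ⟨_, hjb⟩ => ?_
  have hC : (0 : ℝ) < m.choose j := mod_cast Nat.choose_pos (by omega)
  have hstep : (2 * m.choose j : ℝ) ≤ m.choose (j + 1) :=
    mod_cast Nat.two_mul_choose_le_choose_succ (by omega)
  unfold twoPowDivChoose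
  rw [div_le_div_iff₀ (by linarith) hC, pow_succ, mul_assoc]
  gcongr

theorem twoPowDivChoose_monotoneOn {m a b : ℕ} (ha : m ≤ 3 * a + 2) (hb : b ≤ m) :
    MonotoneOn (twoPowDivChoose m) (Set.Icc a b) := by
  refine monotoneOn_of_le_add_one Set.ordConnected_Icc fun j _ ⟨haj, _⟩ ⟨_, hjb⟩ => ?_
  have hC : (0 : ℝ) < m.choose (j + 1) := mod_cast Nat.choose_pos (by omega)
  have hstep : (m.choose (j + 1) : ℝ) ≤ 2 * m.choose j :=
    mod_cast Nat.choose_succ_le_two_mul_choose (by omega)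
  unfold twoPowDivChoose
  rw [div_le_div_iff₀ (by linarith) hC, pow_succ, mul_assoc]
  gcongr

theorem twoPowDivChoose_le_max {m a q b : ℕ} (haq : a ≤ q) (hqb : q ≤ b) (hb : b ≤ m) :
    twoPowDivChoose m q ≤ max (twoPowDivChoose m a) (twoPowDivChoose m b) := by
  rcases le_or_gt (3 * q) (m + 1) with h | h
  · exact le_max_of_le_left <|
      twoPowDivChoose_antitoneOn a h ⟨le_rfl, haq⟩ ⟨haq, le_rfl⟩ haq
  · exact le_max_of_le_right <|
      twoPowDivChoose_monotoneOn (by omega) hb ⟨le_rfl, hqb⟩ ⟨hqb, le_rfl⟩ hqb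

theorem twoPowDivChoose_one (m : ℕ) : twoPowDivChoose m 1 = 2 / m := by
  simp [twoPowDivChoose]

theorem twoPowDivChoose_two (m : ℕ) : twoPowDivChoose m 2 = 8 / (m * (m - 1)) := by
  rw [twoPowDivChoose, Nat.cast_choose_two, div_div_eq_mul_div]; norm_num

theorem twoPowDivChoose_three (m : ℕ) :
    twoPowDivChoose m 3 = 48 / (m * (m - 1) * (m - 2)) := by
  rw [twoPowDivChoose, Nat.cast_choose_three, div_div_eq_mul_div]; norm_num

theorem twoPowDivChoose_two_mul_self_le_three {n : ℕ} (hn : 16 ≤ n) :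
    twoPowDivChoose (2 * n) n ≤ twoPowDivChoose (2 * n) 3 := by
  have hCn : (0 : ℝ) < (2 * n).choose n := mod_cast Nat.choose_pos (by omega)
  have hC3 : (0 : ℝ) < (2 * n).choose 3 := mod_cast Nat.choose_pos (by omega)
  have hC3le : ((2 * n).choose 3 : ℝ) ≤ (2 * n : ℕ) ^ 3 / (3).factorial :=
    Nat.choose_le_pow_div 3 (2 * n)
  have hcb : (2 ^ n * n ^ 3 : ℝ) ≤ (2 * n).choose n :=
    mod_cast Nat.two_pow_mul_pow_three_le_centralBinom hn
  unfold twoPowDivChoose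
  rw [div_le_div_iff₀ hCn hC3]
  push_cast at hC3le
  norm_num [Nat.factorial] at hC3le
  calc (2 : ℝ) ^ n * (2 * n).choose 3 ≤ 2 ^ n * ((2 * n) ^ 3 / 6) := by gcongr
    _ = 4 / 3 * (2 ^ n * n ^ 3) := by ring
    _ ≤ 2 ^ 3 * (2 * n).choose n := by linarith

theorem sum_Icc_three_twoPowDivChoose_le {n : ℕ} (hn : 16 ≤ n) :
    ∑ q ∈ Icc 3 n, twoPowDivChoose (2 * n) q ≤ (n - 2) * twoPowDivChoose (2 * n) 3 := by
  have hterm : ∀ q ∈ Icc 3 n, twoPowDivChoose (2 * n) q ≤ twoPowDivChoose (2 * n) 3 := by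
    intro q hq
    rw [mem_Icc] at hq
    simpa [twoPowDivChoose_two_mul_self_le_three hn] using
      twoPowDivChoose_le_max hq.1 hq.2 (by omega : n ≤ 2 * n)
  calc ∑ q ∈ Icc 3 n, twoPowDivChoose (2 * n) q
      ≤ #(Icc 3 n) • twoPowDivChoose (2 * n) 3 := sum_le_card_nsmul _ _ _ hterm
    _ = (n - 2) * twoPowDivChoose (2 * n) 3 := by
      rw [Nat.card_Icc, nsmul_eq_mul, Nat.cast_sub (by omega)]; push_cast; ring

theorem s_eq_add_sum_Icc_three {n : ℕ} (hn : 2 ≤ n) :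
    s n = twoPowDivChoose (2 * n) 1 + twoPowDivChoose (2 * n) 2 +
      ∑ q ∈ Icc 3 n, twoPowDivChoose (2 * n) q := by
  rw [s, ← add_sum_Ioc_eq_sum_Icc (by omega), ← Icc_add_one_left_eq_Ioc,
    ← add_sum_Ioc_eq_sum_Icc (by omega), ← Icc_add_one_left_eq_Ioc, ← add_assoc]
  rfl

theorem s_upper_bound (n : ℕ) (hn : 23 ≤ n) :
    s n ≤ ((n : ℝ) + 10) / ((n : ℝ) * ((n : ℝ) - 1)) := by
  have hn' : (23 : ℝ) ≤ n := mod_cast hn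
  have h0 : (0 : ℝ) < n := by linarith
  have h1 : (0 : ℝ) < n - 1 := by linarith
  have h2 : (0 : ℝ) < 2 * n - 1 := by linarith
  have h3 : (0 : ℝ) < 2 * n - 2 := by linarith
  have hsum : s n = (2 * n ^ 2 + 13 * n - 27) / (n * (n - 1) * (2 * n - 1)) +
      (∑ q ∈ Icc 3 n, twoPowDivChoose (2 * n) q - (n - 2) * twoPowDivChoose (2 * n) 3) := by
    rw [s_eq_add_sum_Icc_three (by omega), twoPowDivChoose_one, twoPowDivChoose_two,
      twoPowDivChoose_three]
    push_cast
    field_simp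
    ring
  have htail := sum_Icc_three_twoPowDivChoose_le (by omega : 16 ≤ n)
  calc s n ≤ (2 * n ^ 2 + 13 * n - 27) / (n * (n - 1) * (2 * n - 1)) := by linarith
    _ ≤ ((n : ℝ) + 10) / ((n : ℝ) * ((n : ℝ) - 1)) := by
      rw [div_le_div_iff₀ (by positivity) (by positivity)]
      nlinarith [mul_pos h0 h1]
end

section
/- The sequence n·s_n converges to 1 as n → ∞, where s_n = Σ_{q=1}^{n} 2^q / C(2n,q). In other words, s_n is asymptotically equivalent to 1/n. -/
open Finset Filter Topology

namespace Nat

theorem pow_mul_choose_le_choose_mul (k n p : ℕ) : k ^ p * n.choose p ≤ (k * n).choose p := by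
  induction p with
  | zero => simp
  | succ p ih =>
    have hk : k * (n - p) ≤ k * n - p := by
      rcases k.eq_zero_or_pos with rfl | hk
      · simp
      · rw [Nat.mul_sub]
        exact Nat.sub_le_sub_left (Nat.le_mul_of_pos_left p hk) _
    refine Nat.le_of_mul_le_mul_right ?_ p.succ_pos
    calc k ^ (p + 1) * n.choose (p + 1) * (p + 1)
        = k * (n - p) * (k ^ p * n.choose p) := by rw [mul_assoc, choose_succ_right_eq]; ring
      _ ≤ (k * n - p) * (k * n).choose p := Nat.mul_le_mul hk ih
      _ = (k * n).choose (p + 1) * (p + 1) := by rw [choose_succ_right_eq, mul_comm]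

theorem pow_three_le_six_mul_choose_three {n m : ℕ} (h : n + 2 ≤ m) : n ^ 3 ≤ 6 * m.choose 3 := by
  have h6 : 6 * m.choose 3 = m * (m - 1) * (m - 2) := by
    rw [show 6 = 3 ! from rfl, ← descFactorial_eq_factorial_mul_choose]
    simp only [descFactorial_succ, tsub_zero, descFactorial_zero, mul_one]
    ring
  rw [h6, pow_three, ← mul_assoc]
  exact Nat.mul_le_mul (Nat.mul_le_mul (by omega) (by omega)) (by omega)

theorem choose_sub_le_choose_add {n p k : ℕ} (h : p + k ≤ n) : (n - p).choose k ≤ n.choose (p + k) :=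
  calc (n - p).choose k = (n - p).choose (n - p - k) := choose_symm_of_eq_add (by omega)
    _ ≤ n.choose (n - p - k) := choose_le_choose _ (sub_le n p)
    _ = n.choose (p + k) := choose_symm_of_eq_add (by omega)

theorem two_pow_mul_pow_three_le_choose {n q : ℕ} (h3 : 3 ≤ q) (hq : q ≤ n) :
    2 ^ q * n ^ 3 ≤ 48 * (2 * n).choose q := by
  obtain ⟨p, rfl⟩ : ∃ p, q = p + 3 := ⟨q - 3, by omega⟩
  have hsmall : n.choose (p + 3) * (p + 3).choose p = n.choose p * (n - p).choose 3 := by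
    simpa using choose_mul (n := n) (le_add_right p 3)
  have hlarge : (2 * n).choose (p + 3) * (p + 3).choose p
      = (2 * n).choose p * (2 * n - p).choose 3 := by
    simpa using choose_mul (n := 2 * n) (le_add_right p 3)
  have hpos : 0 < n.choose (p + 3) * (p + 3).choose p :=
    Nat.mul_pos (choose_pos hq) (choose_pos (le_add_right p 3))
  refine Nat.le_of_mul_le_mul_right ?_ hpos
  calc 2 ^ (p + 3) * n ^ 3 * (n.choose (p + 3) * (p + 3).choose p)
      = 8 * n ^ 3 * (2 ^ p * n.choose p) * (n - p).choose 3 := by rw [hsmall]; ring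
    _ ≤ 8 * (6 * (2 * n - p).choose 3) * (2 * n).choose p * n.choose (p + 3) := by
      gcongr
      · exact pow_three_le_six_mul_choose_three (by omega)
      · simpa using pow_mul_choose_le_choose_mul 2 n p
      · exact choose_sub_le_choose_add hq
    _ = 48 * (2 * n).choose (p + 3) * (n.choose (p + 3) * (p + 3).choose p) := by
      rw [show 48 * (2 * n).choose (p + 3) * (n.choose (p + 3) * (p + 3).choose p)
        = 48 * ((2 * n).choose (p + 3) * (p + 3).choose p) * n.choose (p + 3) by ring, hlarge]
      ring

theorem sq_le_two_mul_choose_two (n : ℕ) : n ^ 2 ≤ (2 * n).choose 2 := by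
  rw [choose_two_right, mul_assoc, Nat.mul_div_cancel_left _ two_pos, sq]
  exact Nat.mul_le_mul_left n (by omega)

end Nat

lemma two_pow_div_choose_le_of_three_le {n q : ℕ} (h3 : 3 ≤ q) (hq : q ≤ n) :
    (2 : ℝ) ^ q / (2 * n).choose q ≤ 48 / n ^ 3 := by
  have hc : (0 : ℝ) < (2 * n).choose q := by exact_mod_cast Nat.choose_pos (by omega)
  have hn : (0 : ℝ) < n := by exact_mod_cast (by omega : 0 < n)
  rw [div_le_div_iff₀ hc (by positivity)]
  exact_mod_cast Nat.two_pow_mul_pow_three_le_choose h3 hq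

lemma two_pow_two_div_choose_le {n : ℕ} (hn : 1 ≤ n) :
    (2 : ℝ) ^ 2 / (2 * n).choose 2 ≤ 4 / n ^ 2 := by
  rw [show (2 : ℝ) ^ 2 = 4 by norm_num]
  gcongr
  exact_mod_cast Nat.sq_le_two_mul_choose_two n

lemma s_eq_inv_add_sum {n : ℕ} (hn : 1 ≤ n) :
    s n = 1 / n + ∑ q ∈ Icc 2 n, (2 : ℝ) ^ q / (2 * n).choose q := by
  rw [s, ← insert_Icc_add_one_left_eq_Icc hn, sum_insert (by simp), Nat.choose_one_right]
  push_cast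
  field_simp

lemma sum_Icc_two_le {n : ℕ} (hn : 2 ≤ n) :
    ∑ q ∈ Icc 2 n, (2 : ℝ) ^ q / (2 * n).choose q ≤ 52 / n ^ 2 := by
  rw [← insert_Icc_add_one_left_eq_Icc hn, sum_insert (by simp)]
  have htail : ∑ q ∈ Icc 3 n, (2 : ℝ) ^ q / (2 * n).choose q ≤ 48 / n ^ 2 :=
    calc ∑ q ∈ Icc 3 n, (2 : ℝ) ^ q / (2 * n).choose q
        ≤ ∑ _q ∈ Icc 3 n, (48 : ℝ) / n ^ 3 :=
          sum_le_sum fun q hq => two_pow_div_choose_le_of_three_le (mem_Icc.1 hq).1 (mem_Icc.1 hq).2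
      _ ≤ n * (48 / n ^ 3) := by
          rw [sum_const, nsmul_eq_mul, Nat.card_Icc]
          gcongr
          exact_mod_cast (by omega : n + 1 - 3 ≤ n)
      _ = 48 / n ^ 2 := by field_simp
  calc (2 : ℝ) ^ 2 / (2 * n).choose 2 + ∑ q ∈ Icc 3 n, (2 : ℝ) ^ q / (2 * n).choose q
      ≤ 4 / (n : ℝ) ^ 2 + 48 / (n : ℝ) ^ 2 :=
        add_le_add (two_pow_two_div_choose_le (by omega)) htail
    _ = 52 / (n : ℝ) ^ 2 := by ring

lemma mul_s_mem_Icc {n : ℕ} (hn : 2 ≤ n) : (n : ℝ) * s n ∈ Set.Icc (1 : ℝ) (1 + 52 / n) := by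
  have hn0 : (0 : ℝ) < n := by exact_mod_cast (by omega : 0 < n)
  have hnonneg : 0 ≤ ∑ q ∈ Icc 2 n, (2 : ℝ) ^ q / (2 * n).choose q :=
    sum_nonneg fun q _ => by positivity
  rw [s_eq_inv_add_sum (by omega), mul_add, mul_one_div_cancel hn0.ne']
  refine ⟨le_add_of_nonneg_right (mul_nonneg hn0.le hnonneg), ?_⟩
  gcongr
  calc (n : ℝ) * ∑ q ∈ Icc 2 n, (2 : ℝ) ^ q / (2 * n).choose q ≤ n * (52 / n ^ 2) := by
        gcongr
        exact sum_Icc_two_le hn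
    _ = 52 / n := by field_simp

theorem s_asymptotic :
    Filter.Tendsto (fun n : ℕ => (n : ℝ) * s n) Filter.atTop (nhds 1) := by
  have hupper : Tendsto (fun n : ℕ => 1 + 52 / (n : ℝ)) atTop (𝓝 1) := by
    simpa using tendsto_const_nhds.add (tendsto_const_div_atTop_nhds_zero_nat (52 : ℝ))
  refine tendsto_of_tendsto_of_tendsto_of_le_of_le' tendsto_const_nhds hupper ?_ ?_ <;>
    filter_upwards [eventually_ge_atTop 2] with n hn
  exacts [(mul_s_mem_Icc hn).1, (mul_s_mem_Icc hn).2]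
end

section
/- Define a_0 = 1 and a_{n+1} = Σ_{q=0}^{n} a_q · a_{n−q} · 2^{min(q, n−q)}. Fix β with 1/2 < β < 1, let k_β = 1/(2^{2β−1}(1 − 1/2^{2β−1})^2), and choose a constant c_β ≥ 1 and integer N such that a_i ≤ c_β^i·(i!)^β for all 0 ≤ i ≤ N and 2(1 + 2^β·k_β) ≤ c_β·(N+1)^β. Then a_n ≤ c_β^n·(n!)^β for all n ≥ 0. -/
/-!
Strong induction. For `m + 1 > N`, the induction hypothesis bounds the `q`-th term of the
recurrence by `c ^ m * (q! (m - q)!) ^ β * 2 ^ p` with `p = min q (m - q)`. Since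
`q! (m - q)! = m! / C(m, p)` and `C(m, p) ≥ C(2p, p) ≥ 4 ^ p / (2p)`, this is at most
`c ^ m * (m!) ^ β * 2 ^ β * p * x ^ p` for `p ≥ 1`, where `x = 2 ^ (1 - 2β) < 1`.
Each `p` occurs for at most two values of `q`, and `∑ p x ^ p = x / (1 - x) ^ 2 = k`, so
`a (m + 1) ≤ c ^ m * (m!) ^ β * 2 (1 + 2 ^ β k) ≤ c ^ m * (m!) ^ β * c (m + 1) ^ β`.
-/

open Real Finset Nat

lemma four_pow_le_two_mul_mul_choose {p n : ℕ} (hp : 1 ≤ p) (hn : 2 * p ≤ n) :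
    4 ^ p ≤ 2 * p * n.choose p :=
  (four_pow_le_two_mul_self_mul_centralBinom p hp).trans <|
    Nat.mul_le_mul_left _ (choose_le_choose p hn)

lemma four_pow_rpow_mul_two_rpow_pow (β : ℝ) (p : ℕ) :
    ((4 : ℝ) ^ p) ^ β * ((2 : ℝ) ^ (1 - 2 * β)) ^ p = 2 ^ p := by
  have h4 : (4 : ℝ) ^ β * 2 ^ (1 - 2 * β) = 2 := by
    rw [show (4 : ℝ) = 2 ^ (2 : ℝ) by norm_num, ← rpow_mul zero_le_two,
      ← rpow_add zero_lt_two]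
    norm_num
  rw [← rpow_pow_comm (by norm_num), ← mul_pow, h4]

lemma two_pow_le_choose_rpow_mul {β : ℝ} (hβ0 : 0 ≤ β) (hβ1 : β ≤ 1) {p n : ℕ}
    (hp : 1 ≤ p) (hn : 2 * p ≤ n) :
    (2 : ℝ) ^ p ≤ (n.choose p : ℝ) ^ β * (2 ^ β * p * (2 ^ (1 - 2 * β)) ^ p) := by
  have hchoose : (4 : ℝ) ^ p ≤ 2 * p * n.choose p := by
    exact_mod_cast four_pow_le_two_mul_mul_choose hp hn
  calc (2 : ℝ) ^ p = ((4 : ℝ) ^ p) ^ β * (2 ^ (1 - 2 * β)) ^ p :=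
        (four_pow_rpow_mul_two_rpow_pow β p).symm
    _ ≤ (2 * p * n.choose p : ℝ) ^ β * (2 ^ (1 - 2 * β)) ^ p := by gcongr
    _ = 2 ^ β * (p : ℝ) ^ β * (n.choose p : ℝ) ^ β * (2 ^ (1 - 2 * β)) ^ p := by
        rw [mul_rpow (by positivity) (by positivity), mul_rpow (by positivity) (by positivity)]
    _ ≤ 2 ^ β * p * (n.choose p : ℝ) ^ β * (2 ^ (1 - 2 * β)) ^ p := by
        gcongr
        exact rpow_le_self_of_one_le (by exact_mod_cast hp) hβ1
    _ = _ := by ring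

noncomputable def binomWeight (β : ℝ) (p : ℕ) : ℝ :=
  if p = 0 then 1 else 2 ^ β * p * (2 ^ (1 - 2 * β)) ^ p

lemma binomWeight_nonneg (β : ℝ) (p : ℕ) : 0 ≤ binomWeight β p := by
  unfold binomWeight; split <;> positivity

lemma two_pow_le_choose_rpow_mul_binomWeight {β : ℝ} (hβ0 : 0 ≤ β) (hβ1 : β ≤ 1) {p n : ℕ}
    (hn : 2 * p ≤ n) : (2 : ℝ) ^ p ≤ (n.choose p : ℝ) ^ β * binomWeight β p := by
  rcases Nat.eq_zero_or_pos p with rfl | hp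
  · simp [binomWeight]
  · rw [binomWeight, if_neg hp.ne']
    exact two_pow_le_choose_rpow_mul hβ0 hβ1 hp hn

lemma factorial_rpow_mul_factorial_rpow_mul_two_pow_le {β : ℝ} (hβ0 : 0 ≤ β) (hβ1 : β ≤ 1)
    {q n : ℕ} (hq : q ≤ n) :
    (q ! : ℝ) ^ β * ((n - q)! : ℝ) ^ β * 2 ^ min q (n - q) ≤
      (n ! : ℝ) ^ β * binomWeight β (min q (n - q)) := by
  have hchoose : n.choose (min q (n - q)) = n.choose q := by
    rcases min_choice q (n - q) with h | h <;> rw [h]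
    exact choose_symm hq
  have hfac : (n ! : ℝ) ^ β = (q ! : ℝ) ^ β * ((n - q)! : ℝ) ^ β * (n.choose q : ℝ) ^ β := by
    rw [← choose_mul_factorial_mul_factorial hq]
    push_cast
    rw [mul_rpow (by positivity) (by positivity), mul_rpow (by positivity) (by positivity)]
    ring
  rw [hfac, mul_assoc _ _ (binomWeight _ _), ← hchoose]
  gcongr
  exact two_pow_le_choose_rpow_mul_binomWeight hβ0 hβ1 (by omega)

lemma hasSum_binomWeight {β : ℝ} (hβ : 1 / 2 < β) :
    HasSum (binomWeight β)
      (1 + 2 ^ β * (2 ^ (1 - 2 * β) / (1 - 2 ^ (1 - 2 * β)) ^ 2)) := by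
  set x : ℝ := 2 ^ (1 - 2 * β)
  have hx : ‖x‖ < 1 := by
    rw [norm_of_nonneg (by positivity)]
    exact rpow_lt_one_of_one_lt_of_neg one_lt_two (by linarith)
  have hweight : binomWeight β = fun p : ℕ => (if p = 0 then 1 else 0) + 2 ^ β * (p * x ^ p) := by
    ext p
    rcases eq_or_ne p 0 with rfl | hp
    · simp [binomWeight]
    · simp [binomWeight, hp, mul_assoc, x]
  rw [hweight]
  exact (hasSum_ite_eq 0 1).add ((hasSum_coe_mul_geometric_of_norm_lt_one hx).mul_left _)

lemma sum_range_apply_min_sub_le {M : Type*} [AddCommMonoid M] [PartialOrder M]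
    [IsOrderedAddMonoid M] {f : ℕ → M} (hf : ∀ p, 0 ≤ f p) (m : ℕ) :
    ∑ q ∈ range (m + 1), f (min q (m - q)) ≤ 2 • ∑ q ∈ range (m + 1), f q := by
  calc ∑ q ∈ range (m + 1), f (min q (m - q))
      ≤ ∑ q ∈ range (m + 1), (f q + f (m - q)) := by
        refine sum_le_sum fun q _ => ?_
        rcases min_choice q (m - q) with h | h <;> rw [h]
        exacts [le_add_of_nonneg_right (hf _), le_add_of_nonneg_left (hf _)]
    _ = 2 • ∑ q ∈ range (m + 1), f q := by
        rw [sum_add_distrib, two_nsmul, ← sum_range_reflect f (m + 1)]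
        simp

lemma sum_binomWeight_min_sub_le {β : ℝ} (hβ : 1 / 2 < β) (m : ℕ) :
    ∑ q ∈ range (m + 1), binomWeight β (min q (m - q)) ≤
      2 * (1 + 2 ^ β * (1 / (2 ^ (2 * β - 1) * (1 - 1 / 2 ^ (2 * β - 1)) ^ 2))) := by
  have hk : 1 / ((2 : ℝ) ^ (2 * β - 1) * (1 - 1 / 2 ^ (2 * β - 1)) ^ 2) =
      2 ^ (1 - 2 * β) / (1 - 2 ^ (1 - 2 * β)) ^ 2 := by
    rw [show 1 - 2 * β = -(2 * β - 1) by ring, rpow_neg zero_le_two]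
    field_simp
  rw [hk]
  calc _ ≤ 2 • ∑ q ∈ range (m + 1), binomWeight β q :=
        sum_range_apply_min_sub_le (binomWeight_nonneg β) m
    _ ≤ 2 • (1 + 2 ^ β * (2 ^ (1 - 2 * β) / (1 - 2 ^ (1 - 2 * β)) ^ 2)) :=
        nsmul_le_nsmul_right
          (sum_le_hasSum _ (fun p _ => binomWeight_nonneg β p) (hasSum_binomWeight hβ)) 2
    _ = _ := (two_nsmul _).trans (two_mul _).symm

lemma apply_succ_le_of_le_pow_mul_factorial_rpow (a : ℕ → ℕ)
    (harec : ∀ n : ℕ,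
      a (n + 1) = ∑ q ∈ range (n + 1), a q * a (n - q) * 2 ^ (min q (n - q)))
    {β c : ℝ} (hβ0 : 0 ≤ β) (hβ1 : β ≤ 1) (hc : 0 ≤ c) {m : ℕ}
    (ih : ∀ q ≤ m, (a q : ℝ) ≤ c ^ q * (q ! : ℝ) ^ β) :
    (a (m + 1) : ℝ) ≤
      c ^ m * (m ! : ℝ) ^ β * ∑ q ∈ range (m + 1), binomWeight β (min q (m - q)) := by
  rw [harec, mul_sum]
  push_cast
  refine sum_le_sum fun q hq => ?_
  have hqm : q ≤ m := Nat.lt_succ_iff.mp (mem_range.mp hq)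
  have hcm : c ^ m = c ^ q * c ^ (m - q) := by rw [← pow_add, Nat.add_sub_cancel' hqm]
  calc (a q : ℝ) * a (m - q) * 2 ^ min q (m - q)
      ≤ c ^ q * (q ! : ℝ) ^ β * (c ^ (m - q) * ((m - q)! : ℝ) ^ β) * 2 ^ min q (m - q) := by
        refine mul_le_mul_of_nonneg_right ?_ (by positivity)
        exact mul_le_mul (ih q hqm) (ih _ (m.sub_le q)) (Nat.cast_nonneg _)
          ((Nat.cast_nonneg _).trans (ih q hqm))
    _ = c ^ m * ((q ! : ℝ) ^ β * ((m - q)! : ℝ) ^ β * 2 ^ min q (m - q)) := by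
        rw [hcm]
        ring
    _ ≤ c ^ m * ((m ! : ℝ) ^ β * binomWeight β (min q (m - q))) := by
        exact mul_le_mul_of_nonneg_left
          (factorial_rpow_mul_factorial_rpow_mul_two_pow_le hβ0 hβ1 hqm) (pow_nonneg hc m)
    _ = c ^ m * (m ! : ℝ) ^ β * binomWeight β (min q (m - q)) := by ring

theorem mp_count_upper_bound_general (a : ℕ → ℕ)
    (harec : ∀ n : ℕ,
      a (n + 1) = ∑ q ∈ Finset.range (n + 1), a q * a (n - q) * 2 ^ (min q (n - q)))
    (β : ℝ) (hβ1 : 1 / 2 < β) (hβ2 : β < 1)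
    (k : ℝ) (hk : k = 1 / ((2 : ℝ) ^ (2 * β - 1) * (1 - 1 / (2 : ℝ) ^ (2 * β - 1)) ^ 2))
    (c : ℝ) (hc : 1 ≤ c) (N : ℕ)
    (hinit : ∀ i ≤ N, (a i : ℝ) ≤ c ^ i * (i.factorial : ℝ) ^ β)
    (hN : 2 * (1 + (2 : ℝ) ^ β * k) ≤ c * ((N : ℝ) + 1) ^ β) :
    ∀ n : ℕ, (a n : ℝ) ≤ c ^ n * (n.factorial : ℝ) ^ β := by
  intro n
  induction n using Nat.strong_induction_on with
  | _ n ih =>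
  rcases le_or_gt n N with hn | hn
  · exact hinit n hn
  obtain ⟨m, rfl⟩ : ∃ m, n = m + 1 := Nat.exists_eq_succ_of_ne_zero (by omega)
  have hβ0 : 0 ≤ β := by linarith
  have hgrowth : 2 * (1 + 2 ^ β * k) ≤ c * ((m : ℝ) + 1) ^ β := by
    refine hN.trans ?_
    gcongr
    exact_mod_cast Nat.le_of_lt_succ hn
  calc (a (m + 1) : ℝ)
      ≤ c ^ m * (m ! : ℝ) ^ β * ∑ q ∈ range (m + 1), binomWeight β (min q (m - q)) :=
        apply_succ_le_of_le_pow_mul_factorial_rpow a harec hβ0 hβ2.le (by linarith)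
          fun q hq => ih q (by omega)
    _ ≤ c ^ m * (m ! : ℝ) ^ β * (c * ((m : ℝ) + 1) ^ β) := by
        gcongr
        exact (hk ▸ sum_binomWeight_min_sub_le hβ1 m).trans hgrowth
    _ = c ^ (m + 1) * ((m + 1)! : ℝ) ^ β := by
        rw [factorial_succ]
        push_cast
        rw [mul_rpow (by positivity) (by positivity)]
        ring

theorem mp_count_upper_bound (a : ℕ → ℕ)
    (ha0 : a 0 = 1)
    (harec : ∀ n : ℕ,
      a (n + 1) = ∑ q ∈ Finset.range (n + 1), a q * a (n - q) * 2 ^ (min q (n - q)))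
    (β : ℝ) (hβ1 : 1 / 2 < β) (hβ2 : β < 1)
    (k : ℝ) (hk : k = 1 / ((2 : ℝ) ^ (2 * β - 1) * (1 - 1 / (2 : ℝ) ^ (2 * β - 1)) ^ 2))
    (c : ℝ) (hc : 1 ≤ c) (N : ℕ)
    (hinit : ∀ i ≤ N, (a i : ℝ) ≤ c ^ i * (i.factorial : ℝ) ^ β)
    (hN : 2 * (1 + (2 : ℝ) ^ β * k) ≤ c * ((N : ℝ) + 1) ^ β) :
    ∀ n : ℕ, (a n : ℝ) ≤ c ^ n * (n.factorial : ℝ) ^ β :=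
  mp_count_upper_bound_general a harec β hβ1 hβ2 k hk c hc N hinit hN
end

section
/- For every β with 1/2 < β < 1 and every n, Σ_{q=0}^{⌊n/2⌋} 2^q/C(n,q)^β ≤ 1 + 2^β·k_β, where k_β = Σ_{q=1}^{∞} q/2^{q(2β−1)} = 1/(2^{2β−1}(1 − 2^{1−2β})^2). -/
/-!
For `1 ≤ q ≤ n / 2`, `C(n, q) ≥ C(2q, q) ≥ 4 ^ q / (2q)`, so with `r = 2 ^ (1 - 2β) < 1` the
`q`-th term is at most `2 ^ β q ^ β r ^ q ≤ 2 ^ β q r ^ q`. Summing against the full series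
`∑ q r ^ q = r / (1 - r) ^ 2 = k` and adding the term `q = 0`, which is `1`, gives the bound.
-/

open Finset

lemma four_pow_div_le_choose {n q : ℕ} (hq : 1 ≤ q) (hqn : 2 * q ≤ n) :
    (4 : ℝ) ^ q / (2 * q) ≤ n.choose q := by
  have h : 4 ^ q ≤ 2 * q * n.choose q :=
    (Nat.four_pow_le_two_mul_self_mul_centralBinom q hq).trans
      (Nat.mul_le_mul_left _ (Nat.choose_le_choose q hqn))
  rw [div_le_iff₀' (by positivity)]
  exact_mod_cast h

lemma two_rpow_one_sub_pow (β : ℝ) (q : ℕ) :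
    ((2 : ℝ) ^ (1 - 2 * β)) ^ q = 2 ^ q / ((4 : ℝ) ^ q) ^ β := by
  rw [← Real.rpow_natCast, ← Real.rpow_mul (by norm_num), ← Real.rpow_natCast (4 : ℝ),
    ← Real.rpow_mul (by norm_num), show (4 : ℝ) = 2 ^ (2 : ℝ) by norm_num,
    ← Real.rpow_mul (by norm_num), ← Real.rpow_natCast (2 : ℝ) q, ← Real.rpow_sub (by norm_num)]
  ring_nf

lemma two_pow_div_choose_rpow_le {β : ℝ} (hβ0 : 0 ≤ β) (hβ1 : β ≤ 1) {n q : ℕ} (hq : 1 ≤ q)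
    (hqn : 2 * q ≤ n) :
    (2 : ℝ) ^ q / (n.choose q : ℝ) ^ β ≤ 2 ^ β * (q * ((2 : ℝ) ^ (1 - 2 * β)) ^ q) := by
  have hq' : (1 : ℝ) ≤ q := by exact_mod_cast hq
  calc (2 : ℝ) ^ q / (n.choose q : ℝ) ^ β
      ≤ 2 ^ q / ((4 : ℝ) ^ q / (2 * q)) ^ β := by
        gcongr
        exact four_pow_div_le_choose hq hqn
    _ = 2 ^ β * ((q : ℝ) ^ β * ((2 : ℝ) ^ (1 - 2 * β)) ^ q) := by
        rw [two_rpow_one_sub_pow, Real.div_rpow (by positivity) (by positivity),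
          Real.mul_rpow (by norm_num) (by positivity)]
        field_simp
    _ ≤ 2 ^ β * (q * ((2 : ℝ) ^ (1 - 2 * β)) ^ q) := by
        gcongr
        exact Real.rpow_le_self_of_one_le hq' hβ1

lemma sum_range_natCast_mul_pow_le {r : ℝ} (hr0 : 0 ≤ r) (hr1 : r < 1) (m : ℕ) :
    ∑ q ∈ range m, (q : ℝ) * r ^ q ≤ r / (1 - r) ^ 2 :=
  sum_le_hasSum _ (fun q _ => by positivity)
    (hasSum_coe_mul_geometric_of_norm_lt_one (by rwa [Real.norm_of_nonneg hr0]))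

theorem binom_sum_bound (β : ℝ) (hβ1 : 1 / 2 < β) (hβ2 : β < 1)
    (k : ℝ) (hk : k = 1 / ((2 : ℝ) ^ (2 * β - 1) * (1 - (2 : ℝ) ^ (1 - 2 * β)) ^ 2))
    (n : ℕ) :
    ∑ q ∈ Finset.range (n / 2 + 1), (2 : ℝ) ^ q / (Nat.choose n q : ℝ) ^ β ≤
      1 + (2 : ℝ) ^ β * k := by
  set r : ℝ := (2 : ℝ) ^ (1 - 2 * β)
  have hr1 : r < 1 := Real.rpow_lt_one_of_one_lt_of_neg one_lt_two (by linarith)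
  have hk_eq : k = r / (1 - r) ^ 2 := by
    rw [hk, show 2 * β - 1 = -(1 - 2 * β) by ring, Real.rpow_neg zero_le_two, one_div,
      mul_inv, inv_inv, div_eq_mul_inv]
  have h_terms : ∀ i ∈ range (n / 2), (2 : ℝ) ^ (i + 1) / (n.choose (i + 1) : ℝ) ^ β ≤
      2 ^ β * (((i + 1 : ℕ) : ℝ) * r ^ (i + 1)) := fun i hi =>
    two_pow_div_choose_rpow_le (by linarith) hβ2.le (by omega) (by have := mem_range.mp hi; omega)
  have h_tail : ∑ i ∈ range (n / 2), ((i + 1 : ℕ) : ℝ) * r ^ (i + 1) ≤ k := by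
    have := sum_range_natCast_mul_pow_le (by positivity) hr1 (n / 2 + 1)
    rwa [sum_range_succ', Nat.cast_zero, zero_mul, add_zero, ← hk_eq] at this
  rw [sum_range_succ', Nat.choose_zero_right, Nat.cast_one, Real.one_rpow, pow_zero, div_one,
    add_comm]
  gcongr
  exact (sum_le_sum h_terms).trans (by rw [← mul_sum]; gcongr)
end
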